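/- If G is a connected claw-free simple graph with at least two vertices (equivalently, a connected claw-free graph with minimum degree at least 1), then the zero forcing number of G is at most the vertex cover number of G, i.e., Z(G) ≤ β(G). -/

import Mathlib

/-!
Let `C` be a minimum vertex cover. Its complement is independent, so by claw-freeness every
vertex of `C` has at most two neighbors outside `C`; call two outside vertices linked when they
share a neighbor in `C`. Once `C` is blue, a vertex of `C` forces across each link, so blueness
spreads through linked classes, and a class containing the only outside neighbor of some cover
vertex turns blue entirely. In every other class pick a representative `t` and trade a cover
neighbor `cov t` of it for `t` in the blue set. Distinct representatives share no neighbor, so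
`t` forces `cov t`, and the blue set still has `|C|` vertices.
-/

open SimpleGraph

namespace ZFPaper

variable {V : Type*} {W : Type*}

/-- The degree of a vertex, as the cardinality of its neighbor set. -/
noncomputable def degSet (G : SimpleGraph V) (v : V) : ℕ := (G.neighborSet v).ncard

/-- The maximum degree of a graph. -/
noncomputable def maxDeg (G : SimpleGraph V) : ℕ := sSup {d : ℕ | ∃ v, degSet G v = d}

/-- The minimum degree of a graph. -/
noncomputable def minDeg (G : SimpleGraph V) : ℕ := sInf {d : ℕ | ∃ v, degSet G v = d}

/-- A set of vertices is a vertex cover if every edge has an endpoint in it. -/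
def IsVC (G : SimpleGraph V) (C : Set V) : Prop :=
  ∀ ⦃u w : V⦄, G.Adj u w → u ∈ C ∨ w ∈ C

/-- The vertex cover number β(G). -/
noncomputable def vcNum (G : SimpleGraph V) : ℕ :=
  sInf {m : ℕ | ∃ C : Set V, IsVC G C ∧ C.ncard = m}

/-- A set of vertices is independent if its vertices are pairwise non-adjacent. -/
def IsIndep (G : SimpleGraph V) (S : Set V) : Prop :=
  ∀ ⦃u : V⦄, u ∈ S → ∀ ⦃w : V⦄, w ∈ S → ¬ G.Adj u w

/-- The independence number α(G). -/
noncomputable def indepNum (G : SimpleGraph V) : ℕ :=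
  sSup {m : ℕ | ∃ S : Set V, IsIndep G S ∧ S.ncard = m}

/-- `Forced G B v` means that, starting from the blue set `B`, the vertex `v` is
eventually colored blue by the zero forcing process: a blue vertex with a unique
white neighbor forces that neighbor to become blue. -/
inductive Forced (G : SimpleGraph V) (B : Set V) : V → Prop
  | init : ∀ v ∈ B, Forced G B v
  | force : ∀ u w : V, Forced G B u → G.Adj u w →
      (∀ x : V, G.Adj u x → x ≠ w → Forced G B x) → Forced G B w

/-- A zero forcing set: iterating the forcing process colors every vertex blue. -/
def IsZFS (G : SimpleGraph V) (B : Set V) : Prop := ∀ v : V, Forced G B v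

/-- The zero forcing number Z(G). -/
noncomputable def zfNum (G : SimpleGraph V) : ℕ :=
  sInf {m : ℕ | ∃ B : Set V, IsZFS G B ∧ B.ncard = m}

/-- A graph is claw-free if it has no induced `K_{1,3}`. -/
def ClawFree (G : SimpleGraph V) : Prop :=
  ¬ ∃ (v a b c : V), G.Adj v a ∧ G.Adj v b ∧ G.Adj v c ∧
      a ≠ b ∧ a ≠ c ∧ b ≠ c ∧ ¬ G.Adj a b ∧ ¬ G.Adj a c ∧ ¬ G.Adj b c

/-- The join `G ∨ H` of two graphs: disjoint union plus all edges between the parts. -/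
def joinG (G : SimpleGraph V) (H : SimpleGraph W) : SimpleGraph (V ⊕ W) where
  Adj a b :=
    (∃ u v, a = Sum.inl u ∧ b = Sum.inl v ∧ G.Adj u v) ∨
    (∃ u v, a = Sum.inr u ∧ b = Sum.inr v ∧ H.Adj u v) ∨
    (∃ u v, a = Sum.inl u ∧ b = Sum.inr v) ∨
    (∃ u v, a = Sum.inr u ∧ b = Sum.inl v)
  symm := by
    refine ⟨?_⟩
    rintro a b (⟨u, v, rfl, rfl, h⟩ | ⟨u, v, rfl, rfl, h⟩ | ⟨u, v, rfl, rfl⟩ | ⟨u, v, rfl, rfl⟩)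
    · exact Or.inl ⟨v, u, rfl, rfl, h.symm⟩
    · exact Or.inr (Or.inl ⟨v, u, rfl, rfl, h.symm⟩)
    · exact Or.inr (Or.inr (Or.inr ⟨v, u, rfl, rfl⟩))
    · exact Or.inr (Or.inr (Or.inl ⟨v, u, rfl, rfl⟩))
  loopless := by
    refine ⟨?_⟩
    rintro a (⟨u, v, rfl, h, hadj⟩ | ⟨u, v, rfl, h, hadj⟩ | ⟨u, v, rfl, h⟩ | ⟨u, v, rfl, h⟩) <;>
      simp_all

/-- The graph obtained from `G` by a `k`-leaf support vertex addition at `v`: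
a new support vertex `w = Sum.inr none` is attached to `v`, and `k` new leaves
`Sum.inr (some i)` are attached to `w`. -/
def lsva (G : SimpleGraph V) (v : V) (k : ℕ) : SimpleGraph (V ⊕ Option (Fin k)) where
  Adj a b :=
    (∃ x y, a = Sum.inl x ∧ b = Sum.inl y ∧ G.Adj x y) ∨
    (a = Sum.inl v ∧ b = Sum.inr none) ∨
    (a = Sum.inr none ∧ b = Sum.inl v) ∨
    (∃ i : Fin k, a = Sum.inr none ∧ b = Sum.inr (some i)) ∨
    (∃ i : Fin k, a = Sum.inr (some i) ∧ b = Sum.inr none)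
  symm := by
    refine ⟨?_⟩
    rintro a b (⟨x, y, rfl, rfl, h⟩ | ⟨rfl, rfl⟩ | ⟨rfl, rfl⟩ | ⟨i, rfl, rfl⟩ | ⟨i, rfl, rfl⟩)
    · exact Or.inl ⟨y, x, rfl, rfl, h.symm⟩
    · exact Or.inr (Or.inr (Or.inl ⟨rfl, rfl⟩))
    · exact Or.inr (Or.inl ⟨rfl, rfl⟩)
    · exact Or.inr (Or.inr (Or.inr (Or.inr ⟨i, rfl, rfl⟩)))
    · exact Or.inr (Or.inr (Or.inr (Or.inl ⟨i, rfl, rfl⟩)))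
  loopless := by
    refine ⟨?_⟩
    rintro a (⟨x, y, rfl, h, hadj⟩ | ⟨rfl, h⟩ | ⟨rfl, h⟩ | ⟨i, rfl, h⟩ | ⟨i, rfl, h⟩) <;> simp_all

/-- `LSVAChain m G H` means `H` is obtained from `G` by a finite sequence of
`m`-leaf support vertex additions (each applied at a vertex of degree at most `m-1`). -/
inductive LSVAChain (m : ℕ) : {α : Type} → SimpleGraph α → {β : Type} → SimpleGraph β → Prop
  | refl {α : Type} (G : SimpleGraph α) : LSVAChain m G G
  | step {α : Type} {G : SimpleGraph α} {β : Type} {H : SimpleGraph β} (v : β)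
      (hv : (H.neighborSet v).ncard ≤ m - 1) :
      LSVAChain m G H → LSVAChain m G (lsva H v m)

/-- The graph obtained from the complete graph `K_n` by attaching one pendant
vertex to each vertex in the set `A`. -/
def pendantKn (n : ℕ) (A : Finset (Fin n)) : SimpleGraph (Fin n ⊕ {a : Fin n // a ∈ A}) where
  Adj a b :=
    (∃ x y : Fin n, a = Sum.inl x ∧ b = Sum.inl y ∧ x ≠ y) ∨
    (∃ p : {a : Fin n // a ∈ A}, a = Sum.inl p.1 ∧ b = Sum.inr p) ∨
    (∃ p : {a : Fin n // a ∈ A}, a = Sum.inr p ∧ b = Sum.inl p.1)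
  symm := by
    refine ⟨?_⟩
    rintro a b (⟨x, y, rfl, rfl, h⟩ | ⟨p, rfl, rfl⟩ | ⟨p, rfl, rfl⟩)
    · exact Or.inl ⟨y, x, rfl, rfl, h.symm⟩
    · exact Or.inr (Or.inr ⟨p, rfl, rfl⟩)
    · exact Or.inr (Or.inl ⟨p, rfl, rfl⟩)
  loopless := by
    refine ⟨?_⟩
    rintro a (⟨x, y, rfl, h, hne⟩ | ⟨p, rfl, h⟩ | ⟨p, rfl, h⟩) <;> simp_all

/-- The graph obtained from a cycle `C_k` with vertices `v_1, …, v_k` (the `Sum.inl`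
vertices) together with disjoint complete graphs `K_{n i}` (the `Sum.inr` vertices),
where every vertex of the `i`-th complete graph is joined to both `v_i` and `v_{i+1}`
(indices mod `k`). -/
def cycleCliques (k : ℕ) (n : Fin k → ℕ) :
    SimpleGraph (Fin k ⊕ Σ i : Fin k, Fin (n i)) where
  Adj a b :=
    match a, b with
    | Sum.inl i, Sum.inl j =>
        i ≠ j ∧ ((j : ℕ) = ((i : ℕ) + 1) % k ∨ (i : ℕ) = ((j : ℕ) + 1) % k)
    | Sum.inl j, Sum.inr s => (j : ℕ) = (s.1 : ℕ) ∨ (j : ℕ) = ((s.1 : ℕ) + 1) % k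
    | Sum.inr s, Sum.inl j => (j : ℕ) = (s.1 : ℕ) ∨ (j : ℕ) = ((s.1 : ℕ) + 1) % k
    | Sum.inr s, Sum.inr t => s ≠ t ∧ s.1 = t.1
  symm := by
    refine ⟨?_⟩
    rintro (i | s) (j | t) h
    · exact ⟨Ne.symm h.1, h.2.symm⟩
    · exact h
    · exact h
    · exact ⟨Ne.symm h.1, h.2.symm⟩
  loopless := by
    refine ⟨?_⟩
    rintro (i | s) h
    · exact h.1 rfl
    · exact h.1 rfl

lemma iff_of_eqvGen {α : Type*} {r : α → α → Prop} {P : α → Prop}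
    (hr : ∀ a b, r a b → (P a ↔ P b)) {a b : α} (h : Relation.EqvGen r a b) : P a ↔ P b :=
  Iff.of_eq (Setoid.eqvGen_le (s := Setoid.ker P) (fun x y hxy => propext (hr x y hxy)) h)

section ZeroForcingVertexCover

variable {G : SimpleGraph V} {B C : Set V} {cov : V → V}

lemma zfNum_le_ncard (hB : IsZFS G B) : zfNum G ≤ B.ncard :=
  Nat.sInf_le ⟨B, hB, rfl⟩

lemma exists_isVC_ncard_eq_vcNum (G : SimpleGraph V) :
    ∃ C : Set V, IsVC G C ∧ C.ncard = vcNum G :=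
  Nat.sInf_mem (s := {m | ∃ C : Set V, IsVC G C ∧ C.ncard = m})
    ⟨_, Set.univ, fun _ _ _ => Or.inl trivial, rfl⟩

lemma IsVC.not_adj (hC : IsVC G C) {u w : V} (hu : u ∉ C) (hw : w ∉ C) : ¬ G.Adj u w :=
  fun h => (hC h).elim hu hw

lemma ClawFree.eq_or_eq_of_adj (hclaw : ClawFree G) {c a b x : V}
    (hca : G.Adj c a) (hcb : G.Adj c b) (hcx : G.Adj c x) (hab : a ≠ b)
    (hnab : ¬ G.Adj a b) (hnax : ¬ G.Adj a x) (hnbx : ¬ G.Adj b x) : x = a ∨ x = b := by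
  by_contra! h
  exact hclaw ⟨c, a, b, x, hca, hcb, hcx, hab, h.1.symm, h.2.symm, hnab, hnax, hnbx⟩

/-- Every vertex of `C` has at most two neighbors outside `C`, stated without counting. -/
def AtMostTwoOutside (G : SimpleGraph V) (C : Set V) : Prop :=
  ∀ c ∈ C, ∀ a b, a ∉ C → b ∉ C → G.Adj c a → G.Adj c b → a ≠ b →
    ∀ x, x ∉ C → G.Adj c x → x = a ∨ x = b

lemma IsVC.atMostTwoOutside (hC : IsVC G C) (hclaw : ClawFree G) : AtMostTwoOutside G C :=
  fun _ _ _ _ ha hb hca hcb hab _ hx hcx => hclaw.eq_or_eq_of_adj hca hcb hcx hab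
    (hC.not_adj ha hb) (hC.not_adj ha hx) (hC.not_adj hb hx)

def Linked (G : SimpleGraph V) (C : Set V) (s t : V) : Prop :=
  ∃ c ∈ C, (s ∉ C ∧ G.Adj c s) ∧ (t ∉ C ∧ G.Adj c t)

noncomputable def linkedRep (G : SimpleGraph V) (C : Set V) (s : V) : V :=
  (Quotient.mk (Relation.EqvGen.setoid (Linked G C)) s).out

lemma eqvGen_linkedRep (G : SimpleGraph V) (C : Set V) (s : V) :
    Relation.EqvGen (Linked G C) s (linkedRep G C s) :=
  Relation.EqvGen.symm _ _ (Quotient.mk_out (s := Relation.EqvGen.setoid (Linked G C)) s)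

lemma linkedRep_eq_of_eqvGen {s t : V} (h : Relation.EqvGen (Linked G C) s t) :
    linkedRep G C s = linkedRep G C t :=
  congrArg Quotient.out (Quotient.sound (s := Relation.EqvGen.setoid (Linked G C)) h)

lemma not_mem_iff_of_eqvGen {s t : V} (h : Relation.EqvGen (Linked G C) s t) :
    s ∉ C ↔ t ∉ C :=
  iff_of_eqvGen (P := (· ∉ C))
    (fun _ _ ⟨_, _, ⟨ha, _⟩, ⟨hb, _⟩⟩ => iff_of_true ha hb) h

def HasPrivateNbr (G : SimpleGraph V) (C : Set V) (s : V) : Prop :=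
  ∃ t, Relation.EqvGen (Linked G C) s t ∧
    ∃ c ∈ C, (t ∉ C ∧ G.Adj c t) ∧ ∀ x, x ∉ C → G.Adj c x → x = t

def stuckReps (G : SimpleGraph V) (C : Set V) : Set V :=
  linkedRep G C '' {s | s ∉ C ∧ ¬ HasPrivateNbr G C s}

lemma not_mem_of_mem_stuckReps {t : V} (ht : t ∈ stuckReps G C) : t ∉ C := by
  obtain ⟨s, hs, rfl⟩ := ht
  exact (not_mem_iff_of_eqvGen (eqvGen_linkedRep G C s)).mp hs.1

lemma eq_of_linked_of_mem_stuckReps {t t' : V} (ht : t ∈ stuckReps G C)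
    (ht' : t' ∈ stuckReps G C) (h : Linked G C t t') : t = t' := by
  have hrep : ∀ {u}, u ∈ stuckReps G C → linkedRep G C u = u := by
    rintro _ ⟨s, _, rfl⟩
    exact (linkedRep_eq_of_eqvGen (eqvGen_linkedRep G C s)).symm
  rw [← hrep ht, ← hrep ht']
  exact linkedRep_eq_of_eqvGen (Relation.EqvGen.rel _ _ h)

lemma forced_of_linked (hCF : ∀ c ∈ C, Forced G B c) (htwo : AtMostTwoOutside G C)
    {s t : V} (hst : Linked G C s t) (hs : Forced G B s) : Forced G B t := by
  obtain ⟨c, hc, ⟨hsC, hcs⟩, ⟨htC, hct⟩⟩ := hst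
  by_cases hts : t = s
  · exact hts ▸ hs
  refine Forced.force c t (hCF c hc) hct fun x hcx hxt => ?_
  by_cases hxC : x ∈ C
  · exact hCF x hxC
  · obtain rfl := (htwo c hc t s htC hsC hct hcs hts x hxC hcx).resolve_left hxt
    exact hs

lemma forced_iff_of_eqvGen (hCF : ∀ c ∈ C, Forced G B c) (htwo : AtMostTwoOutside G C)
    {s t : V} (h : Relation.EqvGen (Linked G C) s t) : Forced G B s ↔ Forced G B t :=
  iff_of_eqvGen (fun _ _ ⟨c, hc, hs, ht⟩ => ⟨forced_of_linked hCF htwo ⟨c, hc, hs, ht⟩,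
    forced_of_linked hCF htwo ⟨c, hc, ht, hs⟩⟩) h

lemma forced_of_hasPrivateNbr (hCF : ∀ c ∈ C, Forced G B c) (htwo : AtMostTwoOutside G C)
    {s : V} (hs : HasPrivateNbr G C s) : Forced G B s := by
  obtain ⟨t, hst, c, hc, ⟨-, hct⟩, hpriv⟩ := hs
  refine (forced_iff_of_eqvGen hCF htwo hst).mpr
    (Forced.force c t (hCF c hc) hct fun x hcx hxt => ?_)
  by_cases hxC : x ∈ C
  · exact hCF x hxC
  · exact absurd (hpriv x hxC hcx) hxt

def blueSet (G : SimpleGraph V) (C : Set V) (cov : V → V) : Set V :=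
  (C \ cov '' stuckReps G C) ∪ stuckReps G C

lemma injOn_stuckReps (hcov : ∀ s, s ∉ C → cov s ∈ C ∧ G.Adj (cov s) s) :
    Set.InjOn cov (stuckReps G C) := fun t ht t' ht' h =>
  eq_of_linked_of_mem_stuckReps ht ht' ⟨cov t, (hcov t (not_mem_of_mem_stuckReps ht)).1,
    ⟨not_mem_of_mem_stuckReps ht, (hcov t (not_mem_of_mem_stuckReps ht)).2⟩,
    ⟨not_mem_of_mem_stuckReps ht', h ▸ (hcov t' (not_mem_of_mem_stuckReps ht')).2⟩⟩

lemma ncard_blueSet_le [Finite V] (hcov : ∀ s, s ∉ C → cov s ∈ C ∧ G.Adj (cov s) s) :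
    (blueSet G C cov).ncard ≤ C.ncard := by
  have hDC : cov '' stuckReps G C ⊆ C := by
    rintro _ ⟨t, ht, rfl⟩
    exact (hcov t (not_mem_of_mem_stuckReps ht)).1
  have hD : (cov '' stuckReps G C).ncard = (stuckReps G C).ncard :=
    (injOn_stuckReps hcov).ncard_image
  calc (blueSet G C cov).ncard
      ≤ (C \ cov '' stuckReps G C).ncard + (stuckReps G C).ncard := Set.ncard_union_le _ _
    _ = C.ncard := by
      rw [Set.ncard_sdiff hDC, hD, Nat.sub_add_cancel (hD ▸ Set.ncard_le_ncard hDC)]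

/-- A stuck representative `t` forces `cov t`: its other neighbors lie in `C` and are not of
the form `cov t'`, as `t'` would then be linked to `t`. -/
lemma forced_blueSet_of_mem (hC : IsVC G C)
    (hcov : ∀ s, s ∉ C → cov s ∈ C ∧ G.Adj (cov s) s) {c : V} (hc : c ∈ C) :
    Forced G (blueSet G C cov) c := by
  rcases em (c ∈ cov '' stuckReps G C) with ⟨t, ht, rfl⟩ | hcD
  · have htC := not_mem_of_mem_stuckReps ht
    refine Forced.force t (cov t) (Forced.init t (Or.inr ht)) (hcov t htC).2.symm
      fun x htx hxc => Forced.init x (Or.inl ⟨(hC htx).resolve_left htC, ?_⟩)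
    rintro ⟨t', ht', rfl⟩
    have htC' := not_mem_of_mem_stuckReps ht'
    refine hxc (congrArg cov (eq_of_linked_of_mem_stuckReps ht' ht ?_))
    exact ⟨cov t', (hcov t' htC').1, ⟨htC', (hcov t' htC').2⟩, ⟨htC, htx.symm⟩⟩
  · exact Forced.init c (Or.inl ⟨hc, hcD⟩)

lemma isZFS_blueSet (hC : IsVC G C) (hcov : ∀ s, s ∉ C → cov s ∈ C ∧ G.Adj (cov s) s)
    (htwo : AtMostTwoOutside G C) : IsZFS G (blueSet G C cov) := by
  have hCF : ∀ c ∈ C, Forced G (blueSet G C cov) c :=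
    fun _ hc => forced_blueSet_of_mem hC hcov hc
  intro v
  by_cases hv : v ∈ C
  · exact hCF v hv
  by_cases hpriv : HasPrivateNbr G C v
  · exact forced_of_hasPrivateNbr hCF htwo hpriv
  · exact (forced_iff_of_eqvGen hCF htwo (eqvGen_linkedRep G C v)).mpr
      (Forced.init _ (Or.inr ⟨v, ⟨hv, hpriv⟩, rfl⟩))

theorem zfNum_le_ncard_of_isVC [Finite V] (hC : IsVC G C)
    (hnbr : ∀ s, s ∉ C → ∃ c, G.Adj s c) (htwo : AtMostTwoOutside G C) :
    zfNum G ≤ C.ncard := by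
  have hcov : ∀ s, ∃ c, s ∉ C → c ∈ C ∧ G.Adj c s := fun s => by
    by_cases hs : s ∈ C
    · exact ⟨s, fun h => (h hs).elim⟩
    · obtain ⟨c, hsc⟩ := hnbr s hs
      exact ⟨c, fun _ => ⟨(hC hsc).resolve_left hs, hsc.symm⟩⟩
  choose cov hcov using hcov
  exact (zfNum_le_ncard (isZFS_blueSet hC hcov htwo)).trans (ncard_blueSet_le hcov)

end ZeroForcingVertexCover

/-- For a connected claw-free graph on at least two vertices,
the zero forcing number is at most the vertex cover number. -/
theorem stmt0 {V : Type*} [Fintype V] (G : SimpleGraph V)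
    (hconn : G.Connected) (hclaw : ClawFree G) (hcard : 2 ≤ Fintype.card V) :
    zfNum G ≤ vcNum G := by
  have : Nontrivial V := Fintype.one_lt_card_iff_nontrivial.1 hcard
  obtain ⟨C, hC, hCcard⟩ := exists_isVC_ncard_eq_vcNum G
  rw [← hCcard]
  exact zfNum_le_ncard_of_isVC hC (fun s _ => hconn.preconnected.exists_adj_of_nontrivial s)
    (hC.atMostTwoOutside hclaw)

end ZFPaper
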